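/- arXiv:1812.07377 — 3 statements merged into one kernel-verified Lean document; each statement's English description precedes it below -/
import Mathlib

section
/- In the (j,m)-balanced redistricting game, the second player can force a tie: there is a strategy for Player 2 ensuring that at the end of the game exactly j bins are majority-white and exactly j bins are majority-black. -/
/-- A move in the `(j,m)`-balanced redistricting game: a color
(`true` = white, `false` = black) together with one of the `2*j` bins. -/
abbrev Move (j : ℕ) := Bool × Fin (2*j)

/-- A strategy: given the history of moves (most recent first), produce a move. -/
abbrev Strat (j : ℕ) := List (Move j) → Move j

/-- The history after `n` moves when Player 1 (moving at even steps) plays `s1`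
and Player 2 plays `s2`.  Most recent move first. -/
def hist (j : ℕ) (s1 s2 : Strat j) : ℕ → List (Move j)
  | 0 => []
  | n+1 =>
      (if n % 2 = 0 then s1 (hist j s1 s2 n) else s2 (hist j s1 s2 n)) :: hist j s1 s2 n

/-- A move `mv` is legal after history `h`: a ball of that color remains
(there are `j*(2*m+1)` balls of each color) and the chosen bin is not full
(each bin has capacity `2*m+1`). -/
def legalMove (j m : ℕ) (h : List (Move j)) (mv : Move j) : Prop :=
  h.countP (fun x => x.1 == mv.1) < j * (2*m+1) ∧
  h.countP (fun x => x.2 == mv.2) < 2*m+1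

/-- Player 1 always plays legally throughout the `2*j*(2*m+1)` moves. -/
def p1Legal (j m : ℕ) (s1 s2 : Strat j) : Prop :=
  ∀ n < 2*j*(2*m+1), n % 2 = 0 →
    legalMove j m (hist j s1 s2 n) (s1 (hist j s1 s2 n))

/-- Player 2 always plays legally throughout the `2*j*(2*m+1)` moves. -/
def p2Legal (j m : ℕ) (s1 s2 : Strat j) : Prop :=
  ∀ n < 2*j*(2*m+1), n % 2 = 1 →
    legalMove j m (hist j s1 s2 n) (s2 (hist j s1 s2 n))

/-- Number of white balls in bin `b` according to history `h`. -/
def whitesIn (j : ℕ) (h : List (Move j)) (b : Fin (2*j)) : ℕ :=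
  h.countP (fun x => x.1 == true && x.2 == b)

/-- Number of black balls in bin `b` according to history `h`. -/
def blacksIn (j : ℕ) (h : List (Move j)) (b : Fin (2*j)) : ℕ :=
  h.countP (fun x => x.1 == false && x.2 == b)

/-- The final history: all `2*j*(2*m+1)` balls have been placed. -/
def finalHist (j m : ℕ) (s1 s2 : Strat j) : List (Move j) :=
  hist j s1 s2 (2*j*(2*m+1))

/-- Number of majority-white bins (at least `m+1` white balls). -/
def majWhiteCount (j m : ℕ) (h : List (Move j)) : ℕ :=
  (Finset.univ.filter (fun b : Fin (2*j) => m+1 ≤ whitesIn j h b)).card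

/-- Number of majority-black bins (at least `m+1` black balls). -/
def majBlackCount (j m : ℕ) (h : List (Move j)) : ℕ :=
  (Finset.univ.filter (fun b : Fin (2*j) => m+1 ≤ blacksIn j h b)).card

/-!
Pair bin `b` with bin `b.rev = 2j-1-b`. Player 2 answers a ball of colour `c` in bin `b` with a
ball of colour `!c` in bin `b.rev`. After each of Player 2's moves the history is a permutation of
its own image under this mirror map, so Player 2's answer is legal whenever Player 1's move was,
and white(`b.rev`) = black(`b`). At the end every bin is full, so white(`b`) + white(`b.rev`) = `2m+1`
is odd and exactly one bin of each pair is majority-white.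
-/

theorem List.map_involutive_cons_cons_perm {α : Type*} {f : α → α} (hf : Function.Involutive f)
    {l : List α} (h : (l.map f).Perm l) (a : α) :
    ((f a :: a :: l).map f).Perm (f a :: a :: l) := by
  rw [List.map_cons, List.map_cons, hf a]
  exact ((h.cons _).cons _).trans (List.Perm.swap _ _ _)

theorem List.countP_comp_of_map_perm {α : Type*} {f : α → α} {l : List α}
    (h : (l.map f).Perm l) (p : α → Bool) : l.countP (p ∘ f) = l.countP p := by
  rw [← List.countP_map, h.countP_eq]

theorem List.sum_countP_snd_eq_length {α β : Type*} [Fintype β] [DecidableEq β]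
    (l : List (α × β)) : ∑ b, l.countP (·.2 == b) = l.length := by
  have := Multiset.sum_count_eq_card (s := Finset.univ) (m := (l.map Prod.snd : Multiset β))
    (by simp)
  simpa [List.count, List.countP_map, Function.comp_def] using this

theorem Fin.rev_ne_self_of_even {n : ℕ} (b : Fin (2 * n)) : b.rev ≠ b := by
  intro h
  have := congrArg Fin.val h
  rw [Fin.val_rev] at this
  omega

theorem Finset.two_mul_card_filter_of_involutive {α : Type*} [Fintype α] {σ : α → α}
    (hσ : Function.Involutive σ) (P : α → Prop) [DecidablePred P] (hP : ∀ a, P (σ a) ↔ ¬ P a) :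
    2 * (Finset.univ.filter P).card = Fintype.card α := by
  have : (Finset.univ.filter fun a => ¬ P a).card = (Finset.univ.filter P).card :=
    Finset.card_nbij' σ σ (fun a => by simp [hP]) (fun a => by simp [hP]) (fun a _ => hσ a)
      (fun a _ => hσ a)
  rw [two_mul]
  nth_rw 2 [← this]
  exact Finset.card_filter_add_card_filter_not _

namespace Redistricting

variable {j : ℕ}

def mirror (mv : Move j) : Move j := (!mv.1, mv.2.rev)

theorem mirror_involutive : Function.Involutive (mirror (j := j)) := fun mv => by
  simp [mirror]

theorem whitesIn_add_blacksIn (h : List (Move j)) (b : Fin (2*j)) :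
    whitesIn j h b + blacksIn j h b = h.countP (·.2 == b) := by
  induction h with
  | nil => rfl
  | cons x h ih =>
    simp only [whitesIn, blacksIn, List.countP_cons] at ih ⊢
    rcases x with ⟨_ | _, c⟩ <;> by_cases hc : c = b <;> simp [hc] at ih ⊢ <;> omega

section Symmetric

variable {h : List (Move j)} (hsymm : (h.map mirror).Perm h)
include hsymm

theorem countP_fst_beq_not (c : Bool) : h.countP (·.1 == !c) = h.countP (·.1 == c) := by
  rw [← List.countP_comp_of_map_perm hsymm]
  congr 1; funext x; simp [mirror]

theorem countP_snd_beq_rev (b : Fin (2*j)) : h.countP (·.2 == b.rev) = h.countP (·.2 == b) := by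
  rw [← List.countP_comp_of_map_perm hsymm]
  congr 1; funext x; simp [mirror, Fin.rev_eq_iff]

theorem whitesIn_rev (b : Fin (2*j)) : whitesIn j h b.rev = blacksIn j h b := by
  rw [whitesIn, blacksIn, ← List.countP_comp_of_map_perm hsymm]
  congr 1; funext x; simp [mirror, beq_eq_decide]

theorem legalMove_cons_mirror {m : ℕ} {mv : Move j} (hmv : legalMove j m h mv) :
    legalMove j m (mv :: h) (mirror mv) := by
  obtain ⟨hcolor, hbin⟩ := hmv
  have hcolor_ne : (mv.1 == !mv.1) = false := by cases mv.1 <;> rfl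
  have hbin_ne : (mv.2 == mv.2.rev) = false := beq_false_of_ne (Fin.rev_ne_self_of_even _).symm
  simp only [legalMove, mirror, List.countP_cons, hcolor_ne, hbin_ne, countP_fst_beq_not hsymm,
    countP_snd_beq_rev hsymm]
  exact ⟨hcolor, hbin⟩

end Symmetric

theorem hist_two_mul_add_one (s1 s2 : Strat j) (t : ℕ) :
    hist j s1 s2 (2*t+1) = s1 (hist j s1 s2 (2*t)) :: hist j s1 s2 (2*t) := by
  simp [hist]

theorem hist_two_mul_add_two (s1 s2 : Strat j) (t : ℕ) :
    hist j s1 s2 (2*t+2) = s2 (hist j s1 s2 (2*t+1)) :: hist j s1 s2 (2*t+1) := by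
  simp [hist, Nat.add_mod]

theorem length_hist (s1 s2 : Strat j) (n : ℕ) : (hist j s1 s2 n).length = n := by
  induction n with
  | zero => rfl
  | succ n ih => simp [hist, ih]

theorem countP_snd_hist_le {m : ℕ} {s1 s2 : Strat j} (h1 : p1Legal j m s1 s2)
    (h2 : p2Legal j m s1 s2) {n : ℕ} (hn : n ≤ 2*j*(2*m+1)) (b : Fin (2*j)) :
    (hist j s1 s2 n).countP (·.2 == b) ≤ 2*m+1 := by
  induction n with
  | zero => simp [hist]
  | succ n ih =>
    set mv := if n % 2 = 0 then s1 (hist j s1 s2 n) else s2 (hist j s1 s2 n)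
    have hmv : legalMove j m (hist j s1 s2 n) mv := by
      by_cases hn2 : n % 2 = 0
      · simpa [mv, hn2] using h1 n hn hn2
      · simpa [mv, hn2] using h2 n hn (by omega)
    rw [hist, List.countP_cons]
    by_cases hb : mv.2 = b
    · simpa [mv, hb] using hmv.2
    · simpa [mv, hb] using ih (by omega)

theorem countP_snd_finalHist {m : ℕ} {s1 s2 : Strat j} (h1 : p1Legal j m s1 s2)
    (h2 : p2Legal j m s1 s2) (b : Fin (2*j)) :
    (finalHist j m s1 s2).countP (·.2 == b) = 2*m+1 := by
  have hle : ∀ b ∈ Finset.univ, (finalHist j m s1 s2).countP (·.2 == b) ≤ 2*m+1 :=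
    fun b _ => countP_snd_hist_le h1 h2 le_rfl b
  refine (Finset.sum_eq_sum_iff_of_le hle).1 ?_ b (Finset.mem_univ b)
  rw [List.sum_countP_snd_eq_length, finalHist, length_hist]
  simp [mul_assoc]

def mirrorStrat (hj : 0 < j) : Strat j
  -- Player 2 never moves on the empty history.
  | [] => (true, ⟨0, by omega⟩)
  | mv :: _ => mirror mv

section MirrorStrat

variable (hj : 0 < j) (s1 : Strat j)

theorem hist_mirrorStrat_two_mul_add_two (t : ℕ) :
    hist j s1 (mirrorStrat hj) (2*t+2) =
      mirror (s1 (hist j s1 (mirrorStrat hj) (2*t))) ::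
        s1 (hist j s1 (mirrorStrat hj) (2*t)) :: hist j s1 (mirrorStrat hj) (2*t) := by
  rw [hist_two_mul_add_two, hist_two_mul_add_one, mirrorStrat]

theorem map_mirror_hist_mirrorStrat_perm (t : ℕ) :
    ((hist j s1 (mirrorStrat hj) (2*t)).map mirror).Perm (hist j s1 (mirrorStrat hj) (2*t)) := by
  induction t with
  | zero => simp [hist]
  | succ t ih =>
    rw [Nat.mul_succ, hist_mirrorStrat_two_mul_add_two]
    exact List.map_involutive_cons_cons_perm mirror_involutive ih _

theorem p2Legal_mirrorStrat {m : ℕ} (h1 : p1Legal j m s1 (mirrorStrat hj)) :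
    p2Legal j m s1 (mirrorStrat hj) := by
  intro n hn hodd
  obtain ⟨t, rfl⟩ : ∃ t, n = 2*t+1 := ⟨n/2, by omega⟩
  rw [hist_two_mul_add_one]
  exact legalMove_cons_mirror (map_mirror_hist_mirrorStrat_perm hj s1 t)
    (h1 (2*t) (by omega) (by omega))

end MirrorStrat

end Redistricting

open Redistricting in
theorem player2_forces_tie_general (j m : ℕ) (hj : 0 < j) :
    ∃ s2 : Strat j, ∀ s1 : Strat j,
      p1Legal j m s1 s2 →
      p2Legal j m s1 s2 ∧
      majWhiteCount j m (finalHist j m s1 s2) = j ∧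
      majBlackCount j m (finalHist j m s1 s2) = j := by
  refine ⟨mirrorStrat hj, fun s1 h1 => ?_⟩
  have h2 := p2Legal_mirrorStrat hj s1 h1
  set H := finalHist j m s1 (mirrorStrat hj)
  have hsymm : (H.map mirror).Perm H := by
    simpa only [H, finalHist, mul_assoc] using map_mirror_hist_mirrorStrat_perm hj s1 (j*(2*m+1))
  have hfull (b : Fin (2*j)) : whitesIn j H b + blacksIn j H b = 2*m+1 :=
    (whitesIn_add_blacksIn H b).trans (countP_snd_finalHist h1 h2 b)
  have hwhite : 2 * majWhiteCount j m H = 2 * j := by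
    rw [majWhiteCount, Finset.two_mul_card_filter_of_involutive Fin.rev_involutive, Fintype.card_fin]
    intro b
    have := whitesIn_rev hsymm b
    have := hfull b
    omega
  have hblack : 2 * majBlackCount j m H = 2 * j := by
    rw [majBlackCount, Finset.two_mul_card_filter_of_involutive Fin.rev_involutive, Fintype.card_fin]
    intro b
    have := whitesIn_rev hsymm b.rev
    rw [Fin.rev_rev] at this
    have := hfull b
    omega
  exact ⟨h2, by omega, by omega⟩

/-- In the `(j,m)`-balanced redistricting game, Player 2 can
force a tie: there is a strategy for Player 2 such that against any legally
playing Player 1, Player 2's moves are all legal and at the end exactly `j`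
bins are majority-white and exactly `j` bins are majority-black. -/
theorem player2_forces_tie (j m : ℕ) (hj : 0 < j) (hm : 0 < m) :
    ∃ s2 : Strat j, ∀ s1 : Strat j,
      p1Legal j m s1 s2 →
      p2Legal j m s1 s2 ∧
      majWhiteCount j m (finalHist j m s1 s2) = j ∧
      majBlackCount j m (finalHist j m s1 s2) = j :=
  player2_forces_tie_general j m hj
end

section
/- In the (1,m)-balanced redistricting game (two bins, each of capacity 2m+1, with 2m+1 white and 2m+1 black balls), Player 1 can always guarantee that at least one bin is majority-white; hence the game ends in a tie under optimal play for every m >= 1. -/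
/-!
With two bins, the white balls of a complete play split as `w₀ + w₁ = 2m+1`, so exactly one bin
holds at least `m+1` of them, and the same holds for the black balls: every complete legal play is
a tie. What remains is a strategy that stays legal against any legal opponent: play white while
white balls remain and use bin 0 while it has room. It is legal because a legal history never
exceeds any capacity, and a history of length `< 2(2m+1)` cannot have exhausted both colors or
filled both bins.
-/

section Counting

variable {α : Type*}

lemma List.countP_cons_le_of_lt {p : α → Bool} {a : α} {l : List α} {c : ℕ}
    (hle : l.countP p ≤ c) (hlt : p a → l.countP p < c) : (a :: l).countP p ≤ c := by
  rw [List.countP_cons]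
  split_ifs with ha
  · exact hlt ha
  · exact hle

lemma countP_fst_true_add_countP_fst_false (l : List (Bool × α)) :
    l.countP (fun x => x.1 == true) + l.countP (fun x => x.1 == false) = l.length := by
  rw [List.length_eq_countP_add_countP (fun x => x.1 == true)]
  congr 2
  simp

lemma countP_and_snd_zero_add_countP_and_snd_one (l : List (α × Fin 2)) (p : α × Fin 2 → Bool) :
    l.countP (fun x => p x && x.2 == 0) + l.countP (fun x => p x && x.2 == 1) = l.countP p := by
  induction l with
  | nil => rfl
  | cons x l ih =>
    rcases x with ⟨a, b⟩
    simp only [List.countP_cons]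
    fin_cases b <;> cases p (a, _) <;> simp <;> omega

lemma card_filter_majority_fin_two {m : ℕ} {f : Fin 2 → ℕ} (hf : f 0 + f 1 = 2 * m + 1) :
    (Finset.univ.filter fun b => m + 1 ≤ f b).card = 1 := by
  rw [Finset.card_filter, Fin.sum_univ_two]
  split_ifs <;> omega

end Counting

section Play

variable {j m : ℕ}

def nextMove (j : ℕ) (s1 s2 : Strat j) (n : ℕ) : Move j :=
  if n % 2 = 0 then s1 (hist j s1 s2 n) else s2 (hist j s1 s2 n)

lemma hist_succ (s1 s2 : Strat j) (n : ℕ) :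
    hist j s1 s2 (n + 1) = nextMove j s1 s2 n :: hist j s1 s2 n := rfl

lemma length_hist (s1 s2 : Strat j) (n : ℕ) : (hist j s1 s2 n).length = n := by
  induction n with
  | zero => rfl
  | succ n ih => rw [hist_succ, List.length_cons, ih]

def LegalPlay (j m : ℕ) (s1 s2 : Strat j) : Prop :=
  ∀ n < 2 * j * (2 * m + 1), legalMove j m (hist j s1 s2 n) (nextMove j s1 s2 n)

lemma legalPlay_iff {s1 s2 : Strat j} :
    LegalPlay j m s1 s2 ↔ p1Legal j m s1 s2 ∧ p2Legal j m s1 s2 := by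
  refine ⟨fun h => ⟨fun n hn hev => ?_, fun n hn hodd => ?_⟩, fun ⟨h1, h2⟩ n hn => ?_⟩
  · simpa only [nextMove, if_pos hev] using h n hn
  · simpa only [nextMove, if_neg (Nat.mod_two_ne_zero.mpr hodd)] using h n hn
  · unfold nextMove
    split_ifs with hev
    · exact h1 n hn hev
    · exact h2 n hn (Nat.mod_two_ne_zero.mp hev)

def WithinCapacity (j m : ℕ) (h : List (Move j)) : Prop :=
  (∀ c, h.countP (fun x => x.1 == c) ≤ j * (2 * m + 1)) ∧
  ∀ b, h.countP (fun x => x.2 == b) ≤ 2 * m + 1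

lemma withinCapacity_nil : WithinCapacity j m [] :=
  ⟨fun _ => Nat.zero_le _, fun _ => Nat.zero_le _⟩

lemma WithinCapacity.cons {h : List (Move j)} {mv : Move j} (hh : WithinCapacity j m h)
    (hmv : legalMove j m h mv) : WithinCapacity j m (mv :: h) := by
  refine ⟨fun c => List.countP_cons_le_of_lt (hh.1 c) fun hc => ?_,
    fun b => List.countP_cons_le_of_lt (hh.2 b) fun hb => ?_⟩
  · simpa [beq_iff_eq.mp hc] using hmv.1
  · simpa [beq_iff_eq.mp hb] using hmv.2

lemma withinCapacity_hist {s1 s2 : Strat j} {n : ℕ}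
    (hlegal : ∀ k < n, legalMove j m (hist j s1 s2 k) (nextMove j s1 s2 k)) :
    WithinCapacity j m (hist j s1 s2 n) := by
  induction n with
  | zero => exact withinCapacity_nil
  | succ n ih =>
    exact (ih fun k hk => hlegal k (by omega)).cons (hlegal n n.lt_succ_self)

lemma legalPlay_of_legal_within_capacity {s1 s2 : Strat j}
    (h1 : ∀ n < 2 * j * (2 * m + 1), n % 2 = 0 → WithinCapacity j m (hist j s1 s2 n) →
      legalMove j m (hist j s1 s2 n) (s1 (hist j s1 s2 n)))
    (h2 : ∀ n < 2 * j * (2 * m + 1), n % 2 = 1 → WithinCapacity j m (hist j s1 s2 n) →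
      legalMove j m (hist j s1 s2 n) (s2 (hist j s1 s2 n))) :
    LegalPlay j m s1 s2 := by
  intro n
  induction n using Nat.strong_induction_on with
  | _ n ih =>
    intro hn
    have hcap := withinCapacity_hist fun k hk => ih k hk (by omega)
    unfold nextMove
    split_ifs with hev
    · exact h1 n hn hev hcap
    · exact h2 n hn (Nat.mod_two_ne_zero.mp hev) hcap

end Play

def greedy (m : ℕ) : Strat 1 := fun h =>
  (decide (h.countP (fun x => x.1 == true) < 2 * m + 1),
   if h.countP (fun x => x.2 == 0) < 2 * m + 1 then 0 else 1)

lemma greedy_legal {m : ℕ} {h : List (Move 1)} (hh : WithinCapacity 1 m h)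
    (hlen : h.length < 2 * 1 * (2 * m + 1)) : legalMove 1 m h (greedy m h) := by
  -- typed over `Move 1`, not `Bool × Fin (2 * 1)`, so that `omega` sees the atoms of `hh`
  have hcolors : h.countP (fun x => x.1 == true) + h.countP (fun x => x.1 == false) = h.length :=
    countP_fst_true_add_countP_fst_false h
  have hbins : h.countP (fun x => x.2 == 0) + h.countP (fun x => x.2 == 1) = h.length := by
    simpa using countP_and_snd_zero_add_countP_and_snd_one h fun _ => true
  have hblack := hh.1 false
  have hbin1 := hh.2 1
  constructor
  · by_cases hw : h.countP (fun x => x.1 == true) < 2 * m + 1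
    · rw [show (greedy m h).1 = true from decide_eq_true hw]; omega
    · rw [show (greedy m h).1 = false from decide_eq_false hw]; omega
  · by_cases hb : h.countP (fun x => x.2 == 0) < 2 * m + 1
    · rw [show (greedy m h).2 = 0 from if_pos hb]; exact hb
    · rw [show (greedy m h).2 = 1 from if_neg hb]; omega

lemma greedy_legal_hist {m : ℕ} {s1 s2 : Strat 1} {n : ℕ} (hn : n < 2 * 1 * (2 * m + 1))
    (hcap : WithinCapacity 1 m (hist 1 s1 s2 n)) :
    legalMove 1 m (hist 1 s1 s2 n) (greedy m (hist 1 s1 s2 n)) :=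
  greedy_legal hcap (by rwa [length_hist])

lemma LegalPlay.tie {m : ℕ} {s1 s2 : Strat 1} (hplay : LegalPlay 1 m s1 s2) :
    majWhiteCount 1 m (finalHist 1 m s1 s2) = 1 ∧ majBlackCount 1 m (finalHist 1 m s1 s2) = 1 := by
  set h := finalHist 1 m s1 s2
  have hcap : WithinCapacity 1 m h := withinCapacity_hist hplay
  have hlen : h.length = 2 * 1 * (2 * m + 1) := length_hist s1 s2 _
  have hcolors : h.countP (fun x => x.1 == true) + h.countP (fun x => x.1 == false) = h.length :=
    countP_fst_true_add_countP_fst_false h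
  have hwhite := hcap.1 true
  have hblack := hcap.1 false
  have hw : whitesIn 1 h 0 + whitesIn 1 h 1 = h.countP (fun x => x.1 == true) :=
    countP_and_snd_zero_add_countP_and_snd_one h _
  have hb : blacksIn 1 h 0 + blacksIn 1 h 1 = h.countP (fun x => x.1 == false) :=
    countP_and_snd_zero_add_countP_and_snd_one h _
  exact ⟨card_filter_majority_fin_two (f := whitesIn 1 h) (by omega),
    card_filter_majority_fin_two (f := blacksIn 1 h) (by omega)⟩

theorem j_eq_one_tie_general (m : ℕ) :
    ∃ s1 s2 : Strat 1,
      (∀ s2' : Strat 1, p2Legal 1 m s1 s2' →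
        p1Legal 1 m s1 s2' ∧ 1 ≤ majWhiteCount 1 m (finalHist 1 m s1 s2')) ∧
      (∀ s1' : Strat 1, p1Legal 1 m s1' s2 →
        p2Legal 1 m s1' s2 ∧ 1 ≤ majBlackCount 1 m (finalHist 1 m s1' s2)) ∧
      majWhiteCount 1 m (finalHist 1 m s1 s2) = 1 ∧
      majBlackCount 1 m (finalHist 1 m s1 s2) = 1 := by
  refine ⟨greedy m, greedy m, fun s2 hp2 => ?_, fun s1 hp1 => ?_, ?_⟩
  · have hplay : LegalPlay 1 m (greedy m) s2 := legalPlay_of_legal_within_capacity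
      (fun n hn _ => greedy_legal_hist hn) fun n hn hodd _ => hp2 n hn hodd
    exact ⟨(legalPlay_iff.mp hplay).1, hplay.tie.1.ge⟩
  · have hplay : LegalPlay 1 m s1 (greedy m) := legalPlay_of_legal_within_capacity
      (fun n hn hev _ => hp1 n hn hev) fun n hn _ => greedy_legal_hist hn
    exact ⟨(legalPlay_iff.mp hplay).2, hplay.tie.2.ge⟩
  · exact (legalPlay_of_legal_within_capacity (fun n hn _ => greedy_legal_hist hn)
      fun n hn _ => greedy_legal_hist hn).tie

/-- In the `(1,m)`-balanced redistricting game (two bins of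
capacity `2*m+1`, with `2*m+1` white and `2*m+1` black balls), Player 1 can
always guarantee at least one majority-white bin, and for every `m ≥ 1` the
game ends in a tie under optimal play: Player 2 can likewise guarantee at
least one majority-black bin, and when these strategies face each other each
player wins exactly one bin. -/
theorem j_eq_one_tie (m : ℕ) (hm : 0 < m) :
    ∃ s1 s2 : Strat 1,
      (∀ s2' : Strat 1, p2Legal 1 m s1 s2' →
        p1Legal 1 m s1 s2' ∧ 1 ≤ majWhiteCount 1 m (finalHist 1 m s1 s2')) ∧
      (∀ s1' : Strat 1, p1Legal 1 m s1' s2 →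
        p2Legal 1 m s1' s2 ∧ 1 ≤ majBlackCount 1 m (finalHist 1 m s1' s2)) ∧
      majWhiteCount 1 m (finalHist 1 m s1 s2) = 1 ∧
      majBlackCount 1 m (finalHist 1 m s1 s2) = 1 :=
  j_eq_one_tie_general m
end

section
/- If at most j black balls have been played in total during the first r rounds and each round consists of one Player 1 move (always white) and one Player 2 move, then the total number of white balls residing in majority-white or empty bins after round r is at least 2r - 2j + 1, provided Player 1 has placed r+1 white balls into such bins. -/
/-! Split the bins into those that are majority-white or empty and the rest. A bin of the second
kind holds no more white than black balls, so the white balls outside majority-white or empty bins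
number at most the black balls, i.e. at most `j`. Of the `2r + 1` balls, at most `j` are black, so
at least `2r + 1 - 2j` white balls remain in majority-white or empty bins. -/

open Finset

theorem Finset.sum_le_sum_filter_add_sum {ι M : Type*} [AddCommMonoid M] [PartialOrder M]
    [CanonicallyOrderedAdd M] [IsOrderedAddMonoid M] (s : Finset ι) (p : ι → Prop)
    [DecidablePred p] (f g : ι → M) (h : ∀ i ∈ s, ¬ p i → f i ≤ g i) :
    ∑ i ∈ s, f i ≤ ∑ i ∈ s.filter p, f i + ∑ i ∈ s, g i := by
  rw [← sum_filter_add_sum_filter_not s p f]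
  gcongr
  calc ∑ i ∈ s.filter (¬ p ·), f i
      ≤ ∑ i ∈ s.filter (¬ p ·), g i :=
        sum_le_sum fun i hi => h i (mem_filter.1 hi).1 (mem_filter.1 hi).2
    _ ≤ ∑ i ∈ s, g i := sum_le_sum_of_subset (filter_subset _ _)

theorem early_game_whites_general (j r : ℕ)
    (w bl : Fin (2*j) → ℕ)
    (htotal : (∑ b, w b) + (∑ b, bl b) = 2*r + 1)
    (hblack : ∑ b, bl b ≤ j) :
    2*r + 1 ≤
      (∑ b ∈ Finset.univ.filter
        (fun b : Fin (2*j) => bl b < w b ∨ (w b = 0 ∧ bl b = 0)), w b) + 2*j := by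
  have hwhite := sum_le_sum_filter_add_sum univ
    (fun b : Fin (2*j) => bl b < w b ∨ (w b = 0 ∧ bl b = 0)) w bl fun b _ hb => by omega
  omega

/-- Early-game counting bound.  After `r` rounds plus one
extra Player 1 move, `2*r+1` balls have been placed: Player 1 has placed `r+1`
white balls, and Player 2 has placed at most `j` black balls (the rest white).
A bin is majority-white if it holds strictly more white than black balls.
Then the total number of white balls residing in majority-white or empty bins
is at least `2*r - 2*j + 1`. -/
theorem early_game_whites (j r : ℕ) (hj : 0 < j)
    (w bl : Fin (2*j) → ℕ)
    (htotal : (∑ b, w b) + (∑ b, bl b) = 2*r + 1)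
    (hblack : ∑ b, bl b ≤ j) :
    2*r + 1 ≤
      (∑ b ∈ Finset.univ.filter
        (fun b : Fin (2*j) => bl b < w b ∨ (w b = 0 ∧ bl b = 0)), w b) + 2*j :=
  early_game_whites_general j r w bl htotal hblack
end
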